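/- For positive integers r, n, k, the polynomial M_r(t;n,k) has the Taylor expansion M_r(t;n,k) = δ_{k^r|n} + Σ_{l=1}^{k} ((t−1)^l / l!) Σ_{m=1}^l s(l,m)·Q_r(n,k,m)/k^{rm}, where δ_{k^r|n} is 1 if k^r | n and 0 otherwise. -/

import Mathlib

open Finset

/-- Cohen's `r`-Ramanujan sum. -/
noncomputable def ramcr (r n k : ℕ) : ℂ :=
  ∑ m ∈ (Finset.Icc 1 (k ^ r)).filter
      (fun m => ∀ d ∈ Finset.Icc 2 (k ^ r), ¬(d ^ r ∣ m ∧ d ^ r ∣ k ^ r)),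
    Complex.exp (2 * Real.pi * Complex.I * m * n / (k ^ r))

/-- `M_r(t;n,k) = (1/k^r) Σ_{d|k} c_r(n,k/d) t^d`. -/
noncomputable def neckr (r : ℕ) (t : ℂ) (n k : ℕ) : ℂ :=
  (1 / (k : ℂ) ^ r) * ∑ d ∈ k.divisors, ramcr r n (k / d) * t ^ d

/-- Signed Stirling numbers of the first kind. -/
def stirS : ℕ → ℕ → ℤ
  | 0, 0 => 1
  | 0, _ + 1 => 0
  | l + 1, 0 => -(l : ℤ) * stirS l 0
  | l + 1, m + 1 => stirS l m - (l : ℤ) * stirS l (m + 1)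

/-!
Writing `t ^ d = ((t - 1) + 1) ^ d` and `d.choose l * l! = d (d - 1) ⋯ (d - l + 1)
= Σ_m s(l,m) d ^ m` expands each `t ^ d` with `d ≤ k`; averaging with the weights
`c_r(n, k/d) / k^r` gives the claim, with constant term `(1/k^r) Σ_{e ∣ k} c_r(n, e)`.
That sum is `δ_{k^r ∣ n}`: every `j ∈ [1, k^r]` is uniquely `m g^r` with `g ∣ k` the largest
divisor such that `g^r ∣ j` and `m` `r`-coprime to `(k/g)^r`, so the `r`-Ramanujan sums over
`e ∣ k` recombine into the full geometric sum `Σ_{j=1}^{k^r} e^{2πijn/k^r}`.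
-/

/-- The residues `m ∈ [1, e^r]` with `gcd_r(m, e^r) = 1`, over which `ramcr r n e` sums. -/
def rCoprimeResidues (r e : ℕ) : Finset ℕ :=
  (Icc 1 (e ^ r)).filter fun m => ∀ d ∈ e.divisors, d ^ r ∣ m → d = 1

lemma ramcr_condition_iff {r e m : ℕ} (hr : r ≠ 0) (he : e ≠ 0) :
    (∀ d ∈ Icc 2 (e ^ r), ¬(d ^ r ∣ m ∧ d ^ r ∣ e ^ r)) ↔
      ∀ d ∈ e.divisors, d ^ r ∣ m → d = 1 := by
  constructor
  · intro h d hd hdm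
    have hde : d ∣ e := Nat.dvd_of_mem_divisors hd
    by_contra hd1
    have hd2 : 2 ≤ d := by have := Nat.pos_of_mem_divisors hd; omega
    have hde' : d ≤ e ^ r :=
      (Nat.le_of_dvd (Nat.pos_of_ne_zero he) hde).trans (Nat.le_self_pow hr e)
    exact h d (mem_Icc.mpr ⟨hd2, hde'⟩) ⟨hdm, pow_dvd_pow_of_dvd hde r⟩
  · rintro h d hd ⟨hdm, hde⟩
    have := h d (Nat.mem_divisors.mpr ⟨(Nat.pow_dvd_pow_iff hr).mp hde, he⟩) hdm
    have := (mem_Icc.mp hd).1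
    omega

lemma ramcr_eq_sum_rCoprimeResidues {r : ℕ} (hr : r ≠ 0) (n e : ℕ) :
    ramcr r n e = ∑ m ∈ rCoprimeResidues r e,
      Complex.exp (2 * Real.pi * Complex.I * m * n / (e ^ r)) := by
  refine sum_congr (filter_congr fun m hm => ramcr_condition_iff hr ?_) fun _ _ => rfl
  rintro rfl
  simp [zero_pow hr] at hm

lemma dvd_of_pow_dvd_mul_pow {r g e m g' : ℕ} (hg : g ≠ 0) (he : e ≠ 0)
    (hm : ∀ d ∈ e.divisors, d ^ r ∣ m → d = 1) (hg'k : g' ∣ g * e)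
    (hg'm : g' ^ r ∣ m * g ^ r) :
    g' ∣ g := by
  obtain ⟨c, d, a, hc, hda, rfl, rfl⟩ :=
    Nat.exists_coprime' (Nat.gcd_pos_of_pos_right g' (Nat.pos_of_ne_zero hg))
  have hde : d ∣ e := by
    rw [show a * c * e = a * e * c by ring] at hg'k
    exact hda.dvd_of_dvd_mul_left (Nat.dvd_of_mul_dvd_mul_right hc hg'k)
  have hdm : d ^ r ∣ m := by
    rw [mul_pow, mul_pow, ← mul_assoc] at hg'm
    exact (hda.pow r r).dvd_of_dvd_mul_right
      (Nat.dvd_of_mul_dvd_mul_right (pow_pos hc r) hg'm)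
  rw [hm d (Nat.mem_divisors.mpr ⟨hde, he⟩) hdm, one_mul]
  exact dvd_mul_left c a

lemma div_ne_zero_of_dvd {k e : ℕ} (hk : k ≠ 0) (he : e ∣ k) : k / e ≠ 0 :=
  (Nat.div_ne_zero_iff_of_dvd he).mpr ⟨hk, ne_zero_of_dvd_ne_zero hk he⟩

lemma eq_of_mul_pow_div_eq {r k e e' m m' : ℕ} (hk : k ≠ 0) (he : e ∣ k) (he' : e' ∣ k)
    (hm : m ∈ rCoprimeResidues r e) (hm' : m' ∈ rCoprimeResidues r e')
    (h : m * (k / e) ^ r = m' * (k / e') ^ r) : e = e' ∧ m = m' := by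
  have key : ∀ {e e' m m'}, e ∣ k → e' ∣ k → m ∈ rCoprimeResidues r e →
      m * (k / e) ^ r = m' * (k / e') ^ r → k / e' ∣ k / e := by
    intro e e' m m' he he' hm h
    refine dvd_of_pow_dvd_mul_pow (div_ne_zero_of_dvd hk he) (ne_zero_of_dvd_ne_zero hk he)
      (mem_filter.mp hm).2 ?_ (h ▸ dvd_mul_left _ _)
    rw [Nat.div_mul_cancel he]
    exact Nat.div_dvd_of_dvd he'
  have hdiv : k / e = k / e' := Nat.dvd_antisymm (key he' he hm' h.symm) (key he he' hm h)
  have hee' : e = e' := by rw [← Nat.div_div_self he hk, hdiv, Nat.div_div_self he' hk]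
  subst hee'
  have hpos : 0 < (k / e) ^ r := pow_pos (Nat.pos_of_ne_zero (div_ne_zero_of_dvd hk he)) r
  exact ⟨rfl, Nat.eq_of_mul_eq_mul_right hpos h⟩

lemma exists_mul_pow_div_eq {r k j : ℕ} (hk : k ≠ 0) (hj : j ∈ Icc 1 (k ^ r)) :
    ∃ e ∈ k.divisors, ∃ m ∈ rCoprimeResidues r e, m * (k / e) ^ r = j := by
  obtain ⟨hj1, hjk⟩ := mem_Icc.mp hj
  obtain ⟨g, hgS, hgmax⟩ := exists_max_image (k.divisors.filter fun g => g ^ r ∣ j) id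
    ⟨1, mem_filter.mpr ⟨Nat.one_mem_divisors.mpr hk, by simp⟩⟩
  obtain ⟨⟨hgk, -⟩, hgj⟩ := (mem_filter.mp hgS).imp_left Nat.mem_divisors.mp
  have hg : 0 < g := Nat.pos_of_dvd_of_pos hgk (Nat.pos_of_ne_zero hk)
  refine ⟨k / g, Nat.mem_divisors.mpr ⟨Nat.div_dvd_of_dvd hgk, hk⟩, j / g ^ r, ?_, ?_⟩
  · refine mem_filter.mpr ⟨mem_Icc.mpr ⟨?_, ?_⟩, fun d hd hdm => ?_⟩
    · exact Nat.div_pos (Nat.le_of_dvd (by omega) hgj) (pow_pos hg r)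
    · rw [Nat.div_pow hgk]
      exact Nat.div_le_div_right hjk
    · have hgd : g * d ∈ k.divisors.filter fun g => g ^ r ∣ j := by
        refine mem_filter.mpr ⟨Nat.mem_divisors.mpr ⟨?_, hk⟩, ?_⟩
        · simpa [Nat.mul_div_cancel' hgk] using mul_dvd_mul_left g (Nat.dvd_of_mem_divisors hd)
        · simpa [mul_pow, Nat.mul_div_cancel' hgj] using mul_dvd_mul_left (g ^ r) hdm
      have hle : g * d ≤ g := hgmax _ hgd
      have := Nat.pos_of_mem_divisors hd
      nlinarith
  · rw [Nat.div_div_self hgk hk, Nat.div_mul_cancel hgj]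

lemma sum_divisors_sum_rCoprimeResidues {M : Type*} [AddCommMonoid M] {r k : ℕ} (hk : k ≠ 0)
    (f : ℕ → M) :
    ∑ e ∈ k.divisors, ∑ m ∈ rCoprimeResidues r e, f (m * (k / e) ^ r) =
      ∑ j ∈ Icc 1 (k ^ r), f j := by
  rw [sum_sigma']
  refine sum_nbij (fun p => p.2 * (k / p.1) ^ r) ?_ ?_ ?_ fun _ _ => rfl
  · rintro ⟨e, m⟩ hp
    simp only [mem_sigma, rCoprimeResidues, mem_filter, mem_Icc, Nat.mem_divisors] at hp ⊢
    obtain ⟨⟨hek, -⟩, ⟨hm1, hm2⟩, -⟩ := hp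
    refine ⟨Nat.one_le_iff_ne_zero.mpr
      (mul_ne_zero (by omega) (pow_ne_zero r (div_ne_zero_of_dvd hk hek))), ?_⟩
    calc m * (k / e) ^ r ≤ e ^ r * (k / e) ^ r := Nat.mul_le_mul_right _ hm2
      _ = k ^ r := by rw [← mul_pow, Nat.mul_div_cancel' hek]
  · rintro ⟨e, m⟩ hp ⟨e', m'⟩ hp' h
    simp only [coe_sigma, Set.mem_sigma_iff, mem_coe, Nat.mem_divisors] at hp hp'
    obtain ⟨rfl, rfl⟩ := eq_of_mul_pow_div_eq hk hp.1.1 hp'.1.1 hp.2 hp'.2 h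
    rfl
  · intro j hj
    obtain ⟨e, he, m, hm, rfl⟩ := exists_mul_pow_div_eq hk hj
    exact ⟨⟨e, m⟩, by simpa using ⟨Nat.mem_divisors.mp he, hm⟩, rfl⟩

lemma sum_Icc_pow_of_pow_eq_one {K : Type*} [Field K] [DecidableEq K] {x : K} {N : ℕ}
    (hx : x ^ N = 1) : ∑ j ∈ Icc 1 N, x ^ j = if x = 1 then (N : K) else 0 := by
  split_ifs with h
  · simp [h]
  · rw [← Finset.Ico_add_one_right_eq_Icc, sum_Ico_eq_sum_range, Nat.add_sub_cancel]
    simp only [pow_add, pow_one, ← mul_sum, geom_sum_eq h, hx, sub_self, zero_div, mul_zero]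

lemma sum_Icc_exp_two_pi_I_mul_div (n : ℕ) {N : ℕ} (hN : N ≠ 0) :
    ∑ j ∈ Icc 1 N, Complex.exp (2 * Real.pi * Complex.I * j * n / N)
      = if N ∣ n then (N : ℂ) else 0 := by
  have hζ := Complex.isPrimitiveRoot_exp N hN
  set ζ := Complex.exp (2 * Real.pi * Complex.I / N)
  have hterm : ∀ j : ℕ, Complex.exp (2 * Real.pi * Complex.I * j * n / N) = (ζ ^ n) ^ j := by
    intro j
    rw [← pow_mul, ← Complex.exp_nat_mul]
    push_cast
    ring_nf
  simp only [hterm]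
  rw [sum_Icc_pow_of_pow_eq_one (by rw [← pow_mul, mul_comm, pow_mul, hζ.pow_eq_one, one_pow])]
  simp only [hζ.pow_eq_one_iff_dvd]

lemma sum_divisors_ramcr {r k : ℕ} (hr : r ≠ 0) (hk : k ≠ 0) (n : ℕ) :
    ∑ e ∈ k.divisors, ramcr r n e = if k ^ r ∣ n then (k : ℂ) ^ r else 0 := by
  set ψ : ℕ → ℂ := fun j => Complex.exp (2 * Real.pi * Complex.I * j * n / (k ^ r : ℕ))
  have hterm : ∀ e ∈ k.divisors, ∀ m : ℕ,
      Complex.exp (2 * Real.pi * Complex.I * m * n / (e ^ r)) = ψ (m * (k / e) ^ r) := by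
    intro e he m
    have hek := Nat.dvd_of_mem_divisors he
    have hke : ((k / e : ℕ) : ℂ) * e = k := by exact_mod_cast Nat.div_mul_cancel hek
    have he0 : (e : ℂ) ≠ 0 := Nat.cast_ne_zero.mpr (Nat.ne_of_gt (Nat.pos_of_mem_divisors he))
    have hke0 : ((k / e : ℕ) : ℂ) ≠ 0 := Nat.cast_ne_zero.mpr (div_ne_zero_of_dvd hk hek)
    simp only [ψ]
    congr 1
    push_cast
    rw [← hke]
    field_simp
    ring
  calc ∑ e ∈ k.divisors, ramcr r n e
      = ∑ e ∈ k.divisors, ∑ m ∈ rCoprimeResidues r e, ψ (m * (k / e) ^ r) :=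
        sum_congr rfl fun e he => by
          rw [ramcr_eq_sum_rCoprimeResidues hr]
          exact sum_congr rfl fun m _ => hterm e he m
    _ = ∑ j ∈ Icc 1 (k ^ r), ψ j := sum_divisors_sum_rCoprimeResidues hk ψ
    _ = _ := by
        rw [sum_Icc_exp_two_pi_I_mul_div n (pow_ne_zero r hk)]
        push_cast
        rfl

open Polynomial in
lemma coeff_descPochhammer_eq_stirS {R : Type*} [Ring R] (l m : ℕ) :
    (descPochhammer R l).coeff m = stirS l m := by
  induction l generalizing m with
  | zero => cases m <;> simp [stirS, coeff_one]
  | succ l ih =>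
    rw [descPochhammer_succ_right, ← C_eq_natCast]
    cases m with
    | zero => simp [stirS, ih, mul_coeff_zero, Nat.cast_comm]
    | succ m =>
      rw [coeff_mul_X_sub_C, ih, ih, stirS]
      push_cast
      rw [Nat.cast_comm]

lemma sum_Icc_stirS_mul_pow {R : Type*} [CommRing R] [IsDomain R] {l : ℕ} (hl : l ≠ 0) (x : R) :
    ∑ m ∈ Icc 1 l, (stirS l m : R) * x ^ m = (descPochhammer R l).eval x := by
  rw [Polynomial.eval_eq_sum_range, descPochhammer_natDegree, range_eq_Ico,
    sum_eq_sum_Ico_succ_bot (by omega), Ico_add_one_right_eq_Icc,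
    Polynomial.coeff_zero_eq_eval_zero, descPochhammer_ne_zero_eval_zero R hl, zero_mul, zero_add]
  simp only [coeff_descPochhammer_eq_stirS]

lemma pow_eq_sum_range_descFactorial {K : Type*} [Field K] [CharZero K] {d N : ℕ} (hd : d ≤ N)
    (t : K) : t ^ d = ∑ l ∈ range (N + 1), (t - 1) ^ l / l.factorial * d.descFactorial l := by
  calc t ^ d = ∑ l ∈ range (d + 1), (t - 1) ^ l * d.choose l := by
        simpa using add_pow (t - 1) 1 d
    _ = ∑ l ∈ range (N + 1), (t - 1) ^ l * d.choose l :=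
        sum_subset (range_subset_range.mpr (by omega)) fun l _ hl => by
          rw [Nat.choose_eq_zero_of_lt (by simpa using hl), Nat.cast_zero, mul_zero]
    _ = _ := sum_congr rfl fun l _ => by
        have hl : (l.factorial : K) ≠ 0 := Nat.cast_ne_zero.mpr l.factorial_ne_zero
        rw [Nat.descFactorial_eq_factorial_mul_choose, Nat.cast_mul]
        field_simp

theorem stmt12_general (r n k : ℕ) (hr : 0 < r) (hk : 0 < k) (t : ℂ) :
    neckr r t n k
      = (if k ^ r ∣ n then 1 else 0)
        + ∑ l ∈ Finset.Icc 1 k, (t - 1) ^ l / (Nat.factorial l : ℂ) *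
            ∑ m ∈ Finset.Icc 1 l, (stirS l m : ℂ) *
              ((1 / (k : ℂ) ^ r) * ∑ d ∈ k.divisors, ramcr r n (k / d) * (d : ℂ) ^ m) := by
  have hconst : 1 / (k : ℂ) ^ r * ∑ d ∈ k.divisors, ramcr r n (k / d)
      = if k ^ r ∣ n then 1 else 0 := by
    rw [Nat.sum_div_divisors, sum_divisors_ramcr hr.ne' hk.ne']
    split_ifs
    · exact one_div_mul_cancel (pow_ne_zero r (Nat.cast_ne_zero.mpr hk.ne'))
    · rw [mul_zero]
  have hdesc : ∀ l ∈ Icc 1 k, ∀ d : ℕ,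
      (d.descFactorial l : ℂ) = ∑ m ∈ Icc 1 l, (stirS l m : ℂ) * (d : ℂ) ^ m := by
    intro l hl d
    rw [sum_Icc_stirS_mul_pow (by simp at hl; omega), descPochhammer_eval_eq_descFactorial]
  calc neckr r t n k
      = ∑ l ∈ range (k + 1), (t - 1) ^ l / l.factorial *
          (1 / (k : ℂ) ^ r * ∑ d ∈ k.divisors, ramcr r n (k / d) * d.descFactorial l) := by
        rw [neckr, sum_congr rfl fun d hd => by
          rw [pow_eq_sum_range_descFactorial (Nat.divisor_le hd) t]]
        simp only [mul_sum]
        rw [sum_comm]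
        exact sum_congr rfl fun _ _ => sum_congr rfl fun _ _ => by ring
    _ = _ := by
        rw [range_eq_Ico, sum_eq_sum_Ico_succ_bot (by omega), Ico_add_one_right_eq_Icc]
        congr 1
        · simpa only [pow_zero, Nat.factorial_zero, Nat.cast_one, div_one, one_mul,
            Nat.descFactorial_zero, mul_one] using hconst
        · refine sum_congr rfl fun l hl => ?_
          simp only [hdesc l hl, mul_sum]
          rw [sum_comm]
          exact sum_congr rfl fun _ _ => sum_congr rfl fun _ _ => by ring

theorem stmt12 (r n k : ℕ) (hr : 0 < r) (hn : 0 < n) (hk : 0 < k) (t : ℂ) :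
    neckr r t n k
      = (if k ^ r ∣ n then 1 else 0)
        + ∑ l ∈ Finset.Icc 1 k, (t - 1) ^ l / (Nat.factorial l : ℂ) *
            ∑ m ∈ Finset.Icc 1 l, (stirS l m : ℂ) *
              ((1 / (k : ℂ) ^ r) * ∑ d ∈ k.divisors, ramcr r n (k / d) * (d : ℂ) ^ m) :=
  stmt12_general r n k hr hk t
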